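/- LP^MLN programs 𝔽 and 𝔾 over 𝒫 are structurally equivalent if and only if for every interpretation X, the reducts ({𝔽̄}^ch)^X and ({𝔾̄}^ch)^X are classically equivalent, i.e., satisfied by exactly the same interpretations. -/

import Mathlib

namespace LPMLN

/-- Propositional formulas over a set of atoms `P`, built from atoms and `⊥`
using `∧`, `∨`, `→`. -/
inductive Formula (P : Type) : Type where
  | atom : P → Formula P
  | bot  : Formula P
  | and  : Formula P → Formula P → Formula P
  | or   : Formula P → Formula P → Formula P
  | imp  : Formula P → Formula P → Formula P
deriving DecidableEq

variable {P : Type} [DecidableEq P]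

/-- `¬F` abbreviates `F → ⊥`. -/
def Formula.neg (F : Formula P) : Formula P := .imp F .bot

/-- Classical evaluation of a formula in an interpretation `X ⊆ P`. -/
def Formula.eval (X : Finset P) : Formula P → Bool
  | .atom p => decide (p ∈ X)
  | .bot => false
  | .and F G => F.eval X && G.eval X
  | .or F G => F.eval X || G.eval X
  | .imp F G => !(F.eval X) || G.eval X

/-- Classical satisfaction `X ⊨ F`. -/
def Formula.sat (X : Finset P) (F : Formula P) : Prop := F.eval X = true

/-- The reduct `F^X`: every maximal subformula not satisfied by `X` is replaced by `⊥`. -/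
def Formula.reduct (X : Finset P) : Formula P → Formula P
  | .atom p => if p ∈ X then .atom p else .bot
  | .bot => .bot
  | .and F G => if (Formula.and F G).eval X then .and (F.reduct X) (G.reduct X) else .bot
  | .or F G => if (Formula.or F G).eval X then .or (F.reduct X) (G.reduct X) else .bot
  | .imp F G => if (Formula.imp F G).eval X then .imp (F.reduct X) (G.reduct X) else .bot

/-- `X` satisfies a (finite) set of formulas. -/
def satSet (X : Finset P) (Γ : Finset (Formula P)) : Prop := ∀ F ∈ Γ, F.sat X

/-- The reduct `Γ^X` of a finite set of formulas. -/
def reductSet (X : Finset P) (Γ : Finset (Formula P)) : Finset (Formula P) :=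
  Γ.image (Formula.reduct X)

/-- `X` is a stable model of `Γ` if `X ⊨ Γ^X` and no proper subset of `X` satisfies `Γ^X`. -/
def StableModel (Γ : Finset (Formula P)) (X : Finset P) : Prop :=
  satSet X (reductSet X Γ) ∧ ∀ Y, Y ⊂ X → ¬ satSet Y (reductSet X Γ)

/-- A weight is a real number (soft) or the symbol `α` (hard). -/
inductive Weight : Type where
  | soft : ℝ → Weight
  | hard : Weight

noncomputable instance : DecidableEq Weight := Classical.decEq _

/-- An LP^MLN program: a finite set of weighted formulas `w : R`. -/
abbrev Program (P : Type) [DecidableEq P] := Finset (Weight × Formula P)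

/-- `𝔽_X`: the weighted formulas of `𝔽` whose formula is satisfied by `X`. -/
noncomputable def progSat (𝔽 : Program P) (X : Finset P) : Program P :=
  𝔽.filter (fun r => r.2.eval X = true)

/-- `𝔽̄`: the formulas of `𝔽`, with weights dropped. -/
noncomputable def formulas (𝔽 : Program P) : Finset (Formula P) := 𝔽.image Prod.snd

/-- `X` is a soft stable model of `𝔽` (i.e. `X ∈ SM[𝔽]`) if `X` is a stable model of `𝔽̄_X`. -/
def SoftStable (𝔽 : Program P) (X : Finset P) : Prop :=
  StableModel (formulas (progSat 𝔽 X)) X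

/-- w-expressions: either zero or a formal expression `e^{c₁ + c₂·α}` with `c₁ : ℝ`, `c₂ : ℤ`. -/
inductive WExpr : Type where
  | zero : WExpr
  | exp : ℝ → ℤ → WExpr

/-- Multiplication of w-expressions: add exponents componentwise; zero is absorbing. -/
def WExpr.mul : WExpr → WExpr → WExpr
  | .zero, _ => .zero
  | _, .zero => .zero
  | .exp a b, .exp c d => .exp (a + c) (b + d)

/-- Inverse of a w-expression: negate both exponents. -/
def WExpr.inv : WExpr → WExpr
  | .zero => .zero
  | .exp a b => .exp (-a) (-b)

/-- Evaluation of a w-expression at a real number `a`. -/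
noncomputable def WExpr.eval (a : ℝ) : WExpr → ℝ
  | .zero => 0
  | .exp c₁ c₂ => Real.exp (c₁ + c₂ * a)

/-- The real contribution of a weight (hard rules contribute `0` to the soft sum). -/
def softWeight : Weight → ℝ
  | .soft r => r
  | .hard => 0

/-- Sum of the weights of the soft rules of `𝔽`. -/
noncomputable def softSum (𝔽 : Program P) : ℝ := ∑ r ∈ 𝔽, softWeight r.1

/-- The number of hard rules of `𝔽`. -/
noncomputable def hardCount (𝔽 : Program P) : ℤ :=
  ((𝔽.filter (fun r => r.1 = Weight.hard)).card : ℤ)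

/-- `TW(𝔽) = e^{c₁ + c₂·α}` where `c₁` is the sum of the soft weights and
`c₂` the number of hard rules. -/
noncomputable def TW (𝔽 : Program P) : WExpr := .exp (softSum 𝔽) (hardCount 𝔽)

open Classical in
/-- `W_𝔽(X) = TW(𝔽_X)` if `X ∈ SM[𝔽]`, and zero otherwise. -/
noncomputable def W (𝔽 : Program P) (X : Finset P) : WExpr :=
  if SoftStable 𝔽 X then TW (progSat 𝔽 X) else .zero

open Classical in
/-- `W^pnt_𝔽(X) = TW(𝔽 \ 𝔽_X)⁻¹` if `X ∈ SM[𝔽]`, and zero otherwise. -/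
noncomputable def Wpnt (𝔽 : Program P) (X : Finset P) : WExpr :=
  if SoftStable 𝔽 X then (TW (𝔽 \ progSat 𝔽 X)).inv else .zero

/-- `P_𝔽(X)`: the limit as `a → ∞` of the normalized evaluation of `W_𝔽(X)`. -/
noncomputable def Pr [Fintype P] (𝔽 : Program P) (X : Finset P) : ℝ :=
  Filter.limUnder Filter.atTop
    (fun a : ℝ => (W 𝔽 X).eval a / ∑ Y : Finset P, (W 𝔽 Y).eval a)

/-- `P^pnt_𝔽(X)`: the limit as `a → ∞` of the normalized evaluation of `W^pnt_𝔽(X)`. -/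
noncomputable def PrPnt [Fintype P] (𝔽 : Program P) (X : Finset P) : ℝ :=
  Filter.limUnder Filter.atTop
    (fun a : ℝ => (Wpnt 𝔽 X).eval a / ∑ Y : Finset P, (Wpnt 𝔽 Y).eval a)

/-- Weak equivalence: the same probability distribution. -/
def WeakEquiv [Fintype P] (𝔽 𝔾 : Program P) : Prop :=
  ∀ X : Finset P, Pr 𝔽 X = Pr 𝔾 X

/-- Strong equivalence of LP^MLN programs. -/
def StrongEquiv [Fintype P] (𝔽 𝔾 : Program P) : Prop :=
  ∀ (ℍ : Program P) (X : Finset P), Pr (𝔽 ∪ ℍ) X = Pr (𝔾 ∪ ℍ) X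

/-- Structural equivalence of LP^MLN programs. -/
def StructEquiv (𝔽 𝔾 : Program P) : Prop :=
  ∀ (ℍ : Program P) (X : Finset P), SoftStable (𝔽 ∪ ℍ) X ↔ SoftStable (𝔾 ∪ ℍ) X

/-- HT satisfaction `⟨Y,X⟩ ⊨ₕₜ F` (at the world "here"). -/
def htSat (Y X : Finset P) : Formula P → Prop
  | .atom p => p ∈ Y
  | .bot => False
  | .and F G => htSat Y X F ∧ htSat Y X G
  | .or F G => htSat Y X F ∨ htSat Y X G
  | .imp F G => (htSat Y X F → htSat Y X G) ∧ (Formula.imp F G).sat X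

/-- `⟨Y,X⟩` is an HT model of a set `Γ` of formulas. -/
def HTModel (Γ : Finset (Formula P)) (Y X : Finset P) : Prop :=
  Y ⊆ X ∧ ∀ F ∈ Γ, htSat Y X F

/-- `⟨Y,X⟩` is a soft HT model of an LP^MLN program `𝔽`. -/
def SoftHT (𝔽 : Program P) (Y X : Finset P) : Prop :=
  Y ⊆ X ∧ ∀ r ∈ progSat 𝔽 X, htSat Y X r.2

/-- The choice formula `{F}^ch = F ∨ ¬F`. -/
def Formula.ch (F : Formula P) : Formula P := .or F F.neg

/-- `{Γ}^ch`, choice formulas of a set of formulas. -/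
def chSet (Γ : Finset (Formula P)) : Finset (Formula P) := Γ.image Formula.ch

/-- Renaming of atoms. -/
def Formula.rename {Q : Type} (f : P → Q) : Formula P → Formula Q
  | .atom p => .atom (f p)
  | .bot => .bot
  | .and F G => .and (F.rename f) (G.rename f)
  | .or F G => .or (F.rename f) (G.rename f)
  | .imp F G => .imp (F.rename f) (G.rename f)

/-- `Δ_{𝒫'}(F)`, a formula over `𝒫 ∪ 𝒫'`; unprimed atoms are `Sum.inl p`,
primed atoms `p'` are `Sum.inr p`. -/
def Formula.delta : Formula P → Formula (P ⊕ P)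
  | .atom p => .atom (Sum.inr p)
  | .bot => .bot
  | .and F G => .and F.delta G.delta
  | .or F G => .or F.delta G.delta
  | .imp F G => .and (.imp F.delta G.delta)
      (.imp (F.rename Sum.inl) (G.rename Sum.inl))

/-- `Δ_{𝒫'}(Γ)` for a set of formulas. -/
def deltaSet (Γ : Finset (Formula P)) : Finset (Formula (P ⊕ P)) :=
  Γ.image Formula.delta

/-- The interpretation `Y' ∪ X` of `𝒫 ∪ 𝒫'`. -/
def primedInterp (Y X : Finset P) : Finset (P ⊕ P) :=
  X.image Sum.inl ∪ Y.image Sum.inr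

/-!
Both sides compare, for each `X`, the interpretations `Z` with `Z ⊨ (𝔽̄_X)^X`: `X ∈ SM[𝔽 ∪ ℍ]`
iff no `Z ⊊ X` satisfies both `(𝔽̄_X)^X` and `(ℍ̄_X)^X`, and `Y ⊨ ({𝔽̄}^ch)^X` iff
`Y ∩ X ⊨ (𝔽̄_X)^X`. This gives sufficiency at once. For necessity, suppose `Y ⊊ X` satisfies
`(𝔽̄_X)^X` but not `(𝔾̄_X)^X`, and let `ℍ` consist of the hard facts `p` for `p ∈ Y` and the hard
rules `p → q` for `p, q ∈ X \ Y`. The only proper subset of `X` satisfying `(ℍ̄_X)^X` is `Y`, so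
`X` is a soft stable model of `𝔾 ∪ ℍ` but not of `𝔽 ∪ ℍ`.
-/

namespace Formula

lemma reduct_eq_bot_of_not_sat {X : Finset P} {F : Formula P} (h : ¬ F.sat X) :
    F.reduct X = .bot := by
  simp only [sat, Bool.not_eq_true] at h
  cases F <;> simp_all [reduct, eval]

lemma sat_reduct_self (X : Finset P) (F : Formula P) : (F.reduct X).sat X ↔ F.sat X := by
  unfold sat
  induction F with
  | atom p => by_cases hp : p ∈ X <;> simp [reduct, eval, hp]
  | bot => rfl
  | and F G ihF ihG | or F G ihF ihG | imp F G ihF ihG =>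
    simp only [reduct]; split <;> simp_all [eval]

lemma eval_reduct_inter (X Y : Finset P) (F : Formula P) :
    (F.reduct X).eval (Y ∩ X) = (F.reduct X).eval Y := by
  induction F with
  | atom p => by_cases hp : p ∈ X <;> simp [reduct, eval, hp]
  | bot => rfl
  | and F G ihF ihG | or F G ihF ihG | imp F G ihF ihG =>
    simp only [reduct]; split <;> simp [eval, ihF, ihG]

lemma sat_reduct_ch (X Y : Finset P) (F : Formula P) :
    (F.ch.reduct X).sat Y ↔ (F.sat X → (F.reduct X).sat Y) := by
  by_cases hF : F.sat X
  · have hneg : F.neg.reduct X = .bot :=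
      reduct_eq_bot_of_not_sat (by simp_all [sat, neg, eval])
    simp_all [sat, ch, reduct, eval]
  · simp_all [sat, ch, neg, reduct, eval, reduct_eq_bot_of_not_sat hF]

end Formula

/-- `ReductModel Γ X Z` says `Z ⊨ (Γ_X)^X`, where `Γ_X` is the part of `Γ` satisfied by `X`. -/
def ReductModel (Γ : Finset (Formula P)) (X Z : Finset P) : Prop :=
  ∀ F ∈ Γ, F.sat X → (F.reduct X).sat Z

lemma reductModel_self (Γ : Finset (Formula P)) (X : Finset P) : ReductModel Γ X X :=
  fun F _ hF => (F.sat_reduct_self X).2 hF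

lemma reductModel_union (Γ Δ : Finset (Formula P)) (X Z : Finset P) :
    ReductModel (Γ ∪ Δ) X Z ↔ ReductModel Γ X Z ∧ ReductModel Δ X Z :=
  Finset.forall_mem_union

lemma reductModel_inter_iff (Γ : Finset (Formula P)) (X Y : Finset P) :
    ReductModel Γ X (Y ∩ X) ↔ ReductModel Γ X Y := by
  simp only [ReductModel, Formula.sat, Formula.eval_reduct_inter]

lemma satSet_reductSet_chSet_iff (Γ : Finset (Formula P)) (X Y : Finset P) :
    satSet Y (reductSet X (chSet Γ)) ↔ ReductModel Γ X Y := by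
  simp only [satSet, reductSet, chSet, Finset.image_image, Finset.forall_mem_image,
    Function.comp_apply, Formula.sat_reduct_ch, ReductModel]

lemma satSet_reductSet_filter_iff (Γ : Finset (Formula P)) (X Z : Finset P) :
    satSet Z (reductSet X (Γ.filter fun F => F.eval X = true)) ↔ ReductModel Γ X Z := by
  simp only [satSet, reductSet, Finset.forall_mem_image, Finset.mem_filter, and_imp,
    ReductModel, Formula.sat]

lemma formulas_union (𝔽 ℍ : Program P) : formulas (𝔽 ∪ ℍ) = formulas 𝔽 ∪ formulas ℍ :=
  Finset.image_union _ _

lemma formulas_progSat (𝔽 : Program P) (X : Finset P) :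
    formulas (progSat 𝔽 X) = (formulas 𝔽).filter fun F => F.eval X = true := by
  rw [formulas, progSat, formulas, Finset.filter_image]

lemma softStable_iff (𝔽 : Program P) (X : Finset P) :
    SoftStable 𝔽 X ↔ ∀ Z ⊂ X, ¬ ReductModel (formulas 𝔽) X Z := by
  simp only [SoftStable, StableModel, formulas_progSat, satSet_reductSet_filter_iff,
    reductModel_self, true_and]

lemma StructEquiv.symm {𝔽 𝔾 : Program P} (h : StructEquiv 𝔽 𝔾) : StructEquiv 𝔾 𝔽 :=
  fun ℍ X => (h ℍ X).symm

noncomputable def hardProgram (Γ : Finset (Formula P)) : Program P := Γ.image fun F => (.hard, F)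

lemma formulas_hardProgram (Γ : Finset (Formula P)) : formulas (hardProgram Γ) = Γ := by
  simp [formulas, hardProgram, Finset.image_image, Function.comp_def]

def gapFormulas (X Y : Finset P) : Finset (Formula P) :=
  Y.image .atom ∪ ((X \ Y) ×ˢ (X \ Y)).image fun pq => .imp (.atom pq.1) (.atom pq.2)

lemma reductModel_gapFormulas_iff {X Y Z : Finset P} (hYX : Y ⊆ X) :
    ReductModel (gapFormulas X Y) X Z ↔
      Y ⊆ Z ∧ ∀ p ∈ X \ Y, ∀ q ∈ X \ Y, p ∈ Z → q ∈ Z := by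
  simp +contextual only [ReductModel, gapFormulas, Finset.forall_mem_union,
    Finset.forall_mem_image, Finset.mem_product, Finset.mem_sdiff, Prod.forall, and_imp]
  simp +contextual [Formula.sat, Formula.reduct, Formula.eval, hYX _, Finset.subset_iff,
    or_iff_not_imp_left]
  exact fun _ => ⟨fun h p hp hpY q hq hqY => h p q hp hpY hq hqY,
    fun h p q hp hpY hq hqY => h p hp hpY q hq hqY⟩

lemma eq_of_reductModel_gapFormulas {X Y Z : Finset P} (hYX : Y ⊆ X) (hZX : Z ⊂ X)
    (h : ReductModel (gapFormulas X Y) X Z) : Z = Y := by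
  obtain ⟨hYZ, hgap⟩ := (reductModel_gapFormulas_iff hYX).1 h
  refine Finset.Subset.antisymm (fun p hpZ => ?_) hYZ
  by_contra hpY
  have hp : p ∈ X \ Y := Finset.mem_sdiff.2 ⟨hZX.subset hpZ, hpY⟩
  refine hZX.not_subset fun q hqX => ?_
  by_cases hqY : q ∈ Y
  · exact hYZ hqY
  · exact hgap p hp q (Finset.mem_sdiff.2 ⟨hqX, hqY⟩) hpZ

lemma reductModel_of_structEquiv {𝔽 𝔾 : Program P} (h : StructEquiv 𝔽 𝔾) {X Y : Finset P}
    (hYX : Y ⊆ X) (hY : ReductModel (formulas 𝔽) X Y) : ReductModel (formulas 𝔾) X Y := by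
  obtain rfl | hYX := hYX.eq_or_ssubset
  · exact reductModel_self _ _
  by_contra hG
  set ℍ := hardProgram (gapFormulas X Y)
  have hℍ_formulas : formulas ℍ = gapFormulas X Y := formulas_hardProgram _
  have hℍ : ReductModel (formulas ℍ) X Y := by
    rw [hℍ_formulas, reductModel_gapFormulas_iff hYX.subset]
    exact ⟨subset_rfl, fun p hp _ _ hpY => absurd hpY (Finset.mem_sdiff.1 hp).2⟩
  have hstable : SoftStable (𝔾 ∪ ℍ) X := by
    simp only [softStable_iff, formulas_union, reductModel_union, hℍ_formulas]
    rintro Z hZX ⟨hGZ, hℍZ⟩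
    exact hG (eq_of_reductModel_gapFormulas hYX.subset hZX hℍZ ▸ hGZ)
  have hunstable : ¬ SoftStable (𝔽 ∪ ℍ) X := by
    simp only [softStable_iff, formulas_union, reductModel_union, not_forall, not_not]
    exact ⟨Y, hYX, hY, hℍ⟩
  exact hunstable ((h ℍ X).2 hstable)

/-- structural equivalence iff for every `X` the reducts `({𝔽̄}^ch)^X` and
`({𝔾̄}^ch)^X` are classically equivalent. -/
theorem stmt10 {P : Type} [DecidableEq P] (𝔽 𝔾 : Program P) :
    StructEquiv 𝔽 𝔾 ↔
      ∀ X Y : Finset P,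
        satSet Y (reductSet X (chSet (formulas 𝔽))) ↔
        satSet Y (reductSet X (chSet (formulas 𝔾))) := by
  simp only [satSet_reductSet_chSet_iff]
  constructor
  · intro h X Y
    rw [← reductModel_inter_iff (formulas 𝔽), ← reductModel_inter_iff (formulas 𝔾)]
    exact ⟨reductModel_of_structEquiv h Finset.inter_subset_right,
      reductModel_of_structEquiv h.symm Finset.inter_subset_right⟩
  · intro h ℍ X
    simp only [softStable_iff, formulas_union, reductModel_union, h]

end LPMLN
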